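/- For any U ∈ A⁺ and V₁ ∈ A⁺ with U →_R V₁, there exists U' ∈ B⁺ such that V₁ →*_R φ(U') and ρ(U) →_{R_S} U'. -/

import Mathlib

/-- A rewriting system: every rule has nonempty left- and right-hand sides. -/
def IsRWS {α : Type*} (R : Set (List α × List α)) : Prop :=
  ∀ r ∈ R, r.1 ≠ [] ∧ r.2 ≠ []

/-- One-step reduction `W₁ →_R W₂`. -/
def Step {α : Type*} (R : Set (List α × List α)) (W₁ W₂ : List α) : Prop :=
  ∃ Z₁ Z₂ X Y, (X, Y) ∈ R ∧ W₁ = Z₁ ++ X ++ Z₂ ∧ W₂ = Z₁ ++ Y ++ Z₂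

/-- `→*_R`: the reflexive-transitive closure of one-step reduction. -/
def Steps {α : Type*} (R : Set (List α × List α)) : List α → List α → Prop :=
  Relation.ReflTransGen (Step R)

/-- Noetherian: no infinite reduction sequence. -/
def Noetherian {α : Type*} (R : Set (List α × List α)) : Prop :=
  ¬ ∃ g : ℕ → List α, ∀ i, Step R (g i) (g (i + 1))

/-- Confluence. -/
def Confluent {α : Type*} (R : Set (List α × List α)) : Prop :=
  ∀ U V W, Steps R U V → Steps R U W → ∃ X, Steps R V X ∧ Steps R W X

/-- Complete rewriting system: Noetherian and confluent. -/
def CompleteRWS {α : Type*} (R : Set (List α × List α)) : Prop :=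
  Noetherian R ∧ Confluent R

/-- `Irr R W`: `W ∈ A⁺` has no factor which is the left-hand side of a rule. -/
def Irr {α : Type*} (R : Set (List α × List α)) (W : List α) : Prop :=
  W ≠ [] ∧ ¬ ∃ Z₁ X Z₂, (∃ Y, (X, Y) ∈ R) ∧ W = Z₁ ++ X ++ Z₂

/-- `Presents R f`: the map sending a nonempty word `u` over `α` to `f u` exhibits the
semigroup `S` as the semigroup presented by `[α; R]`, i.e. the semigroup `A⁺/↔*_R`:
`f` restricted to nonempty words is a surjective semigroup homomorphism whose kernel
is the congruence `↔*_R` generated by `R` (the value of `f` on the empty word is irrelevant). -/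
def Presents {α S : Type*} [Semigroup S] (R : Set (List α × List α)) (f : List α → S) : Prop :=
  (∀ u v : List α, u ≠ [] → v ≠ [] → f (u ++ v) = f u * f v) ∧
  (∀ x : S, ∃ u : List α, u ≠ [] ∧ f u = x) ∧
  (∀ u v : List α, u ≠ [] → v ≠ [] → (f u = f v ↔ Relation.EqvGen (Step R) u v))

/-- `S` has a finite complete rewriting system. -/
def HasFCRS (S : Type*) [Semigroup S] : Prop :=
  ∃ (α : Type) (R : Set (List α × List α)) (f : List α → S),
    Finite α ∧ R.Finite ∧ IsRWS R ∧ CompleteRWS R ∧ Presents R f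

/-! ### The construction of Section 3: adjoining a letter `s` with `φ(s) = W₀`.
The alphabet `B = A ∪ {s}` is modelled as `α ⊕ Unit`, with `Sum.inl a` the letter
`a ∈ A` and `Sum.inr ()` the new letter `s`. -/

/-- The homomorphism `φ : B* → A*` with `φ(a) = a` for `a ∈ A` and `φ(s) = W₀`. -/
def phiS {α : Type*} (W₀ : List α) (l : List (α ⊕ Unit)) : List α :=
  l.flatMap (Sum.elim (fun a => [a]) (fun _ => W₀))

open scoped Classical in
/-- The function `ρ : A* → B*`: `ρ(ε) = ε`; if `W = X₁W₀` ends with `W₀` then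
`ρ(W) = ρ(X₁)s`; otherwise `W = X₂a` with `a ∈ A` and `ρ(W) = ρ(X₂)a`. -/
noncomputable def rhoS {α : Type*} (W₀ : List α) (W : List α) : List (α ⊕ Unit) :=
  if hW : W = [] then []
  else if h : W₀ ≠ [] ∧ W₀ <:+ W then
    rhoS W₀ (W.take (W.length - W₀.length)) ++ [Sum.inr ()]
  else
    rhoS W₀ W.dropLast ++ [Sum.inl (W.getLast hW)]
termination_by W.length
decreasing_by
  · have h1 : W₀.length ≤ W.length := h.2.length_le
    have h2 : 0 < W₀.length := List.length_pos_iff.mpr h.1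
    simp only [List.length_take]
    omega
  · have h3 : 0 < W.length := List.length_pos_iff.mpr hW
    simp only [List.length_dropLast]
    omega

/-- Rules of the form (C1): `ρ(X) → ρ(Y)` for each rule `X → Y` of `R`. -/
def C1 {α : Type*} (R : Set (List α × List α)) (W₀ : List α) :
    Set (List (α ⊕ Unit) × List (α ⊕ Unit)) :=
  {p | ∃ X Y : List α, (X, Y) ∈ R ∧ p = (rhoS W₀ X, rhoS W₀ Y)}

/-- The rule (C2): `W₀ → s`. -/
def C2 {α : Type*} (W₀ : List α) : Set (List (α ⊕ Unit) × List (α ⊕ Unit)) :=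
  {p | p = (W₀.map Sum.inl, [Sum.inr ()])}

/-- Rules of the form (C3): for each rule `X₁X₂ → Y₁` of `R` with `W₀ = Z₁X₁`
(`X₁, Y₁ ∈ A⁺`, `X₂, Z₁ ∈ A*`), the rule `ρ(Z₁X₁X₂) → ρ(Y₁')` where
`Z₁X₁X₂ →*_R Y₁' ∈ Irr(R)`. -/
def C3 {α : Type*} (R : Set (List α × List α)) (W₀ : List α) :
    Set (List (α ⊕ Unit) × List (α ⊕ Unit)) :=
  {p | ∃ X₁ X₂ Y₁ Z₁ Y₁' : List α, X₁ ≠ [] ∧ Y₁ ≠ [] ∧ (X₁ ++ X₂, Y₁) ∈ R ∧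
    W₀ = Z₁ ++ X₁ ∧ Steps R (Z₁ ++ X₁ ++ X₂) Y₁' ∧ Irr R Y₁' ∧
    p = (rhoS W₀ (Z₁ ++ X₁ ++ X₂), rhoS W₀ Y₁')}

/-- Rules of the form (C4): for each rule `X₂X₁ → Y₁` of `R` with `W₀ = X₁Z₁`
(`X₁, Y₁ ∈ A⁺`, `X₂, Z₁ ∈ A*`), the rule `ρ(X₂X₁Z₁) → ρ(Y₁')` where
`X₂X₁Z₁ →*_R Y₁' ∈ Irr(R)`. -/
def C4 {α : Type*} (R : Set (List α × List α)) (W₀ : List α) :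
    Set (List (α ⊕ Unit) × List (α ⊕ Unit)) :=
  {p | ∃ X₁ X₂ Y₁ Z₁ Y₁' : List α, X₁ ≠ [] ∧ Y₁ ≠ [] ∧ (X₂ ++ X₁, Y₁) ∈ R ∧
    W₀ = X₁ ++ Z₁ ∧ Steps R (X₂ ++ X₁ ++ Z₁) Y₁' ∧ Irr R Y₁' ∧
    p = (rhoS W₀ (X₂ ++ X₁ ++ Z₁), rhoS W₀ Y₁')}

/-- Rules of the form (C5): for each rule `X₂X₃X₄ → Y₁` of `R` with `W₀ = X₄X₅ = X₁X₂`
(`X₂, X₄, Y₁ ∈ A⁺`, `X₁, X₃, X₅ ∈ A*`), the rule `ρ(X₁X₂X₃X₄X₅) → ρ(Y₁')` where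
`X₁X₂X₃X₄X₅ →*_R Y₁' ∈ Irr(R)`. -/
def C5 {α : Type*} (R : Set (List α × List α)) (W₀ : List α) :
    Set (List (α ⊕ Unit) × List (α ⊕ Unit)) :=
  {p | ∃ X₁ X₂ X₃ X₄ X₅ Y₁ Y₁' : List α, X₂ ≠ [] ∧ X₄ ≠ [] ∧ Y₁ ≠ [] ∧
    (X₂ ++ X₃ ++ X₄, Y₁) ∈ R ∧ W₀ = X₄ ++ X₅ ∧ W₀ = X₁ ++ X₂ ∧
    Steps R (X₁ ++ X₂ ++ X₃ ++ X₄ ++ X₅) Y₁' ∧ Irr R Y₁' ∧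
    p = (rhoS W₀ (X₁ ++ X₂ ++ X₃ ++ X₄ ++ X₅), rhoS W₀ Y₁')}

/-- Rules of the form (C6): `sX₃ → X₁s` whenever `W₀ = X₁X₂ = X₂X₃` with
`X₁, X₂, X₃ ∈ A⁺`. -/
def C6 {α : Type*} (W₀ : List α) : Set (List (α ⊕ Unit) × List (α ⊕ Unit)) :=
  {p | ∃ X₁ X₂ X₃ : List α, X₁ ≠ [] ∧ X₂ ≠ [] ∧ X₃ ≠ [] ∧
    W₀ = X₁ ++ X₂ ∧ W₀ = X₂ ++ X₃ ∧
    p = (Sum.inr () :: X₃.map Sum.inl, X₁.map Sum.inl ++ [Sum.inr ()])}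

/-- The rewriting system `R_S` over `B = A ∪ {s}`. -/
def RS {α : Type*} (R : Set (List α × List α)) (W₀ : List α) :
    Set (List (α ⊕ Unit) × List (α ⊕ Unit)) :=
  C1 R W₀ ∪ C2 W₀ ∪ C3 R W₀ ∪ C4 R W₀ ∪ C5 R W₀ ∪ C6 W₀

/-!
`ρ` parses a word greedily from the right into letters and `W₀`-blocks. Cutting a word `PS`,
either `ρ(PS) = ρ(P)ρ(S)`, or exactly one block of the parse straddles the cut, and the parse
of what follows that block does not depend on what precedes it. Applying this at both ends of
the redex `X` of `U = Z₁XZ₂` gives four configurations: no block straddles an end of `X` (rule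
C1), a block straddles its left end (C3), its right end (C4), or both (C5); a block cannot
contain `X` because `W₀` is irreducible. In each case the factor of `ρ(U)` covering `X` and the
straddling blocks is the left-hand side of a rule of `R_S`, and confluence of `R` carries
`V₁` to the image under `φ` of the rewritten word.
-/

section

variable {α : Type*} {W₀ : List α}

theorem suffix_append_self_append_iff {W Q T : List α} :
    W <:+ Q ++ (W ++ T) ↔ W <:+ W ++ T :=
  ⟨fun h => List.suffix_of_suffix_length_le h (List.suffix_append Q _) (by simp),
    fun h => h.trans (List.suffix_append Q _)⟩

section Rewriting
variable {R : Set (List α × List α)} {a b M N W V : List α}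

theorem Step.append_left (P : List α) (h : Step R a b) : Step R (P ++ a) (P ++ b) := by
  obtain ⟨Z₁, Z₂, X, Y, hXY, rfl, rfl⟩ := h
  exact ⟨P ++ Z₁, Z₂, X, Y, hXY, by simp, by simp⟩

theorem Step.append_right (T : List α) (h : Step R a b) : Step R (a ++ T) (b ++ T) := by
  obtain ⟨Z₁, Z₂, X, Y, hXY, rfl, rfl⟩ := h
  exact ⟨Z₁, Z₂ ++ T, X, Y, hXY, by simp, by simp⟩

theorem Steps.append_left (P : List α) (h : Steps R a b) : Steps R (P ++ a) (P ++ b) :=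
  h.lift (P ++ ·) fun _ _ => Step.append_left P

theorem Steps.append_right (T : List α) (h : Steps R a b) : Steps R (a ++ T) (b ++ T) :=
  h.lift (· ++ T) fun _ _ => Step.append_right T

theorem Step.ne_nil (hRWS : IsRWS R) (h : Step R a b) : b ≠ [] := by
  obtain ⟨Z₁, Z₂, X, Y, hXY, rfl, rfl⟩ := h
  simp [(hRWS _ hXY).2]

theorem Irr.not_step (hW : Irr R W) : ¬ Step R W V := by
  rintro ⟨Z₁, Z₂, X, Y, hXY, rfl, -⟩
  exact hW.2 ⟨Z₁, X, Z₂, ⟨Y, hXY⟩, rfl⟩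

theorem Irr.eq_of_steps (hW : Irr R W) (h : Steps R W V) : V = W :=
  (h.cases_head.resolve_right fun ⟨_, hstep, _⟩ => hW.not_step hstep).symm

theorem Noetherian.exists_irr (hN : Noetherian R) (hRWS : IsRWS R) (hM : M ≠ []) :
    ∃ N, Steps R M N ∧ Irr R N := by
  have hwf : WellFounded (flip (Step R)) :=
    wellFounded_iff_isEmpty_descending_chain.2 ⟨fun ⟨f, hf⟩ => hN ⟨f, hf⟩⟩
  obtain ⟨N, hMN, hmin⟩ := hwf.has_min {N | Steps R M N} ⟨M, .refl⟩
  refine ⟨N, hMN, ?_, fun ⟨Z₁, X, Z₂, ⟨Y, hXY⟩, hN⟩ => ?_⟩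
  · induction hMN with
    | refl => exact hM
    | tail _ hstep _ => exact hstep.ne_nil hRWS
  · exact hmin _ (hMN.tail ⟨Z₁, Z₂, X, Y, hXY, hN, rfl⟩) ⟨Z₁, Z₂, X, Y, hXY, hN, rfl⟩

theorem Confluent.steps_to_irr (hconf : Confluent R) (h₁ : Steps R M N) (h₂ : Steps R M W)
    (hW : Irr R W) : Steps R N W := by
  obtain ⟨V, hNV, hWV⟩ := hconf M N W h₁ h₂
  rwa [hW.eq_of_steps hWV] at hNV

end Rewriting

theorem rhoS_nil : rhoS W₀ ([] : List α) = [] := by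
  rw [rhoS, dif_pos rfl]

theorem rhoS_append_self (hW₀ : W₀ ≠ []) (P : List α) :
    rhoS W₀ (P ++ W₀) = rhoS W₀ P ++ [Sum.inr ()] := by
  rw [rhoS, dif_neg (by simp [hW₀]), dif_pos ⟨hW₀, List.suffix_append P W₀⟩]
  simp

theorem rhoS_concat_of_not_suffix {P : List α} {a : α} (h : ¬ W₀ <:+ P ++ [a]) :
    rhoS W₀ (P ++ [a]) = rhoS W₀ P ++ [Sum.inl a] := by
  rw [rhoS, dif_neg (by simp), dif_neg fun h' => h h'.2]
  simp

theorem rhoS_ne_nil {W : List α} (hW : W ≠ []) : rhoS W₀ W ≠ [] := by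
  rw [rhoS, dif_neg hW]
  split_ifs <;> simp

@[simp]
theorem phiS_append (l₁ l₂ : List (α ⊕ Unit)) :
    phiS W₀ (l₁ ++ l₂) = phiS W₀ l₁ ++ phiS W₀ l₂ := by
  simp [phiS]

theorem phiS_rhoS (W : List α) : phiS W₀ (rhoS W₀ W) = W := by
  rw [rhoS]
  split_ifs with hW hsuf
  · simp [hW, phiS]
  · rw [phiS_append, phiS_rhoS]
    obtain ⟨P, rfl⟩ := hsuf.2
    simp [phiS]
  · rw [phiS_append, phiS_rhoS]
    simpa [phiS] using List.dropLast_append_getLast hW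
termination_by W.length
decreasing_by
  · have := List.length_pos_iff.2 hsuf.1
    have := hsuf.2.length_le
    simp only [List.length_take]
    omega
  · have := List.length_pos_iff.2 hW
    simp only [List.length_dropLast]
    omega

def SplitsAfterBlock (W₀ S : List α) : Prop :=
  ∀ Q, rhoS W₀ (Q ++ W₀ ++ S) = rhoS W₀ Q ++ Sum.inr () :: rhoS W₀ S

theorem splitsAfterBlock_nil (hW₀ : W₀ ≠ []) : SplitsAfterBlock W₀ [] := fun Q => by
  simp [rhoS_append_self hW₀, rhoS_nil]

theorem SplitsAfterBlock.append_self (hW₀ : W₀ ≠ []) {S : List α} (h : SplitsAfterBlock W₀ S) :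
    SplitsAfterBlock W₀ (S ++ W₀) := fun Q => by
  rw [← List.append_assoc, rhoS_append_self hW₀, h Q, rhoS_append_self hW₀]
  simp

theorem SplitsAfterBlock.concat {S : List α} {a : α} (h : SplitsAfterBlock W₀ S)
    (ha : ¬ W₀ <:+ W₀ ++ S ++ [a]) : SplitsAfterBlock W₀ (S ++ [a]) := fun Q => by
  have hQ : ¬ W₀ <:+ Q ++ W₀ ++ S ++ [a] := by
    simpa [suffix_append_self_append_iff] using ha
  have hS : ¬ W₀ <:+ S ++ [a] := fun hS => ha (hS.trans (by simp))
  rw [← List.append_assoc, rhoS_concat_of_not_suffix hQ, h Q, rhoS_concat_of_not_suffix hS]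
  simp

theorem rhoS_append_eq_or_crossing (hW₀ : W₀ ≠ []) (P S : List α) :
    rhoS W₀ (P ++ S) = rhoS W₀ P ++ rhoS W₀ S ∨
      ∃ P₁ W₁ W₂ S₁, P = P₁ ++ W₁ ∧ S = W₂ ++ S₁ ∧ W₀ = W₁ ++ W₂ ∧ W₁ ≠ [] ∧ W₂ ≠ [] ∧
        SplitsAfterBlock W₀ S₁ := by
  by_cases hS : S = []
  · simp [hS, rhoS_nil]
  by_cases hsuf : W₀ <:+ P ++ S
  · by_cases hlen : W₀.length ≤ S.length
    · obtain ⟨S₀, rfl⟩ := List.suffix_of_suffix_length_le hsuf (List.suffix_append P S) hlen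
      rcases rhoS_append_eq_or_crossing hW₀ P S₀ with
        hsplit | ⟨P₁, W₁, W₂, S₁, rfl, rfl, hW, hW₁, hW₂, hS₁⟩
      · left
        rw [← List.append_assoc, rhoS_append_self hW₀, hsplit, rhoS_append_self hW₀,
          List.append_assoc]
      · exact .inr ⟨P₁, W₁, W₂, S₁ ++ W₀, rfl, by simp, hW, hW₁, hW₂, hS₁.append_self hW₀⟩
    · -- the last block of the parse of `PS` straddles the cut
      obtain ⟨W₁, hW⟩ := List.suffix_of_suffix_length_le (List.suffix_append P S) hsuf (by omega)
      obtain ⟨P₁, hP⟩ := hsuf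
      refine .inr ⟨P₁, W₁, S, [], ?_, by simp, hW.symm, ?_, hS, splitsAfterBlock_nil hW₀⟩
      · exact (List.append_cancel_right (bs := S) (by rw [List.append_assoc, hW, hP])).symm
      · rintro rfl
        simp_all
  · obtain ⟨S₀, a, rfl⟩ := S.eq_nil_or_concat'.resolve_left hS
    rcases rhoS_append_eq_or_crossing hW₀ P S₀ with
      hsplit | ⟨P₁, W₁, W₂, S₁, rfl, rfl, hW, hW₁, hW₂, hS₁⟩
    · left
      rw [← List.append_assoc, rhoS_concat_of_not_suffix (by simpa using hsuf), hsplit,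
        rhoS_concat_of_not_suffix (fun h => hsuf (h.trans (List.suffix_append _ _)))]
      simp
    · refine .inr ⟨P₁, W₁, W₂, S₁ ++ [a], rfl, by simp, hW, hW₁, hW₂, hS₁.concat fun h => hsuf ?_⟩
      have := suffix_append_self_append_iff (Q := P₁) |>.2 (by simpa using h)
      simpa [hW] using this
termination_by S.length
decreasing_by all_goals subst_vars; simp [List.length_pos_iff, hW₀]

section Lifting
variable {R : Set (List α × List α)}

theorem exists_rs_step_of_rule {V M N : List α} (L T : List (α ⊕ Unit)) (hN : N ≠ [])
    (hMN : (rhoS W₀ M, rhoS W₀ N) ∈ RS R W₀) (hV : Steps R V (phiS W₀ L ++ N ++ phiS W₀ T)) :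
    ∃ U', U' ≠ [] ∧ Steps R V (phiS W₀ U') ∧ Step (RS R W₀) (L ++ rhoS W₀ M ++ T) U' :=
  ⟨L ++ rhoS W₀ N ++ T, by simp [rhoS_ne_nil hN], by simpa [phiS_rhoS] using hV,
    ⟨L, T, _, _, hMN, rfl, rfl⟩⟩

theorem exists_rs_step_of_redex (hRWS : IsRWS R) (hcomp : CompleteRWS R) {A X C Y : List α}
    (hXY : (X, Y) ∈ R)
    (hrule : ∀ N, Steps R (A ++ X ++ C) N → Irr R N →
      (rhoS W₀ (A ++ X ++ C), rhoS W₀ N) ∈ RS R W₀)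
    (L T : List (α ⊕ Unit)) :
    ∃ U', U' ≠ [] ∧ Steps R (phiS W₀ L ++ (A ++ Y ++ C) ++ phiS W₀ T) (phiS W₀ U') ∧
      Step (RS R W₀) (L ++ rhoS W₀ (A ++ X ++ C) ++ T) U' := by
  obtain ⟨N, hMN, hN⟩ := hcomp.1.exists_irr hRWS (M := A ++ X ++ C) (by simp [(hRWS _ hXY).1])
  have hYN : Steps R (A ++ Y ++ C) N :=
    hcomp.2.steps_to_irr (.single ⟨A, C, X, Y, hXY, rfl, rfl⟩) hMN hN
  exact exists_rs_step_of_rule L T hN.1 (hrule N hMN hN) ((hYN.append_left _).append_right _)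

theorem exists_rs_step_of_splits (hRWS : IsRWS R) {Z₁ X Z₂ Y : List α} (hXY : (X, Y) ∈ R)
    (h₂ : rhoS W₀ (Z₁ ++ X ++ Z₂) = rhoS W₀ (Z₁ ++ X) ++ rhoS W₀ Z₂)
    (h₁ : rhoS W₀ (Z₁ ++ X) = rhoS W₀ Z₁ ++ rhoS W₀ X) :
    ∃ U', U' ≠ [] ∧ Steps R (Z₁ ++ Y ++ Z₂) (phiS W₀ U') ∧
      Step (RS R W₀) (rhoS W₀ (Z₁ ++ X ++ Z₂)) U' := by
  rw [h₂, h₁]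
  refine exists_rs_step_of_rule (N := Y) _ _ (hRWS _ hXY).2
    (.inl <| .inl <| .inl <| .inl <| .inl ⟨X, Y, hXY, rfl⟩) ?_
  rw [phiS_rhoS, phiS_rhoS]
  exact .refl

theorem exists_rs_step_of_left_crossing (hRWS : IsRWS R) (hcomp : CompleteRWS R)
    {P₁ W₁ W₂ S₁ Z₂ Y : List α} (hXY : (W₂ ++ S₁, Y) ∈ R)
    (h₂ : rhoS W₀ (P₁ ++ W₁ ++ (W₂ ++ S₁) ++ Z₂) =
      rhoS W₀ (P₁ ++ W₁ ++ (W₂ ++ S₁)) ++ rhoS W₀ Z₂)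
    (hW : W₀ = W₁ ++ W₂) (hW₂ : W₂ ≠ []) (hS₁ : SplitsAfterBlock W₀ S₁) :
    ∃ U', U' ≠ [] ∧ Steps R (P₁ ++ W₁ ++ Y ++ Z₂) (phiS W₀ U') ∧
      Step (RS R W₀) (rhoS W₀ (P₁ ++ W₁ ++ (W₂ ++ S₁) ++ Z₂)) U' := by
  have hblock : ∀ Q, Q ++ W₁ ++ (W₂ ++ S₁) = Q ++ W₀ ++ S₁ := by simp [hW]
  have hρ : rhoS W₀ (P₁ ++ W₁ ++ (W₂ ++ S₁) ++ Z₂) =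
      rhoS W₀ P₁ ++ rhoS W₀ (W₁ ++ (W₂ ++ S₁) ++ []) ++ rhoS W₀ Z₂ := by
    rw [h₂, hblock, hS₁, List.append_nil, ← List.nil_append W₁, hblock, hS₁, rhoS_nil]
    simp
  rw [hρ, show P₁ ++ W₁ ++ Y ++ Z₂ =
    phiS W₀ (rhoS W₀ P₁) ++ (W₁ ++ Y ++ []) ++ phiS W₀ (rhoS W₀ Z₂) by simp [phiS_rhoS]]
  refine exists_rs_step_of_redex hRWS hcomp hXY (fun N hMN hN => ?_) _ _
  exact .inl <| .inl <| .inl <| .inr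
    ⟨W₂, S₁, Y, W₁, N, hW₂, (hRWS _ hXY).2, hXY, hW, by simpa using hMN, hN, by simp⟩

theorem exists_rs_step_of_right_crossing (hRWS : IsRWS R) (hcomp : CompleteRWS R)
    {Z₁ X₂ W₁ W₂ S₁ Y : List α} (hXY : (X₂ ++ W₁, Y) ∈ R)
    (h₁ : rhoS W₀ (Z₁ ++ X₂) = rhoS W₀ Z₁ ++ rhoS W₀ X₂)
    (hW : W₀ = W₁ ++ W₂) (hW₁ : W₁ ≠ []) (hS₁ : SplitsAfterBlock W₀ S₁) :
    ∃ U', U' ≠ [] ∧ Steps R (Z₁ ++ Y ++ (W₂ ++ S₁)) (phiS W₀ U') ∧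
      Step (RS R W₀) (rhoS W₀ (Z₁ ++ (X₂ ++ W₁) ++ (W₂ ++ S₁))) U' := by
  have hW₀ : W₀ ≠ [] := by simp [hW, hW₁]
  have hρ : rhoS W₀ (Z₁ ++ (X₂ ++ W₁) ++ (W₂ ++ S₁)) =
      rhoS W₀ Z₁ ++ rhoS W₀ ([] ++ (X₂ ++ W₁) ++ W₂) ++ rhoS W₀ S₁ := by
    rw [show Z₁ ++ (X₂ ++ W₁) ++ (W₂ ++ S₁) = Z₁ ++ X₂ ++ W₀ ++ S₁ by simp [hW], hS₁, h₁,
      show [] ++ (X₂ ++ W₁) ++ W₂ = X₂ ++ W₀ by simp [hW], rhoS_append_self hW₀]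
    simp
  rw [hρ, show Z₁ ++ Y ++ (W₂ ++ S₁) =
    phiS W₀ (rhoS W₀ Z₁) ++ ([] ++ Y ++ W₂) ++ phiS W₀ (rhoS W₀ S₁) by simp [phiS_rhoS]]
  refine exists_rs_step_of_redex hRWS hcomp hXY (fun N hMN hN => ?_) _ _
  exact .inl <| .inl <| .inr
    ⟨W₁, X₂, Y, W₂, N, hW₁, (hRWS _ hXY).2, hXY, hW, by simpa using hMN, hN, by simp⟩

theorem exists_rs_step_of_double_crossing (hRWS : IsRWS R) (hcomp : CompleteRWS R)
    {P₁ W₁ W₂ S₁ W₁' W₂' S₁' Y : List α} (hXY : (W₂' ++ S₁' ++ W₁, Y) ∈ R)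
    (hW : W₀ = W₁ ++ W₂) (hW₁ : W₁ ≠ []) (hS₁ : SplitsAfterBlock W₀ S₁)
    (hW' : W₀ = W₁' ++ W₂') (hW₂' : W₂' ≠ []) (hS₁' : SplitsAfterBlock W₀ S₁') :
    ∃ U', U' ≠ [] ∧ Steps R (P₁ ++ W₁' ++ Y ++ (W₂ ++ S₁)) (phiS W₀ U') ∧
      Step (RS R W₀) (rhoS W₀ (P₁ ++ W₁' ++ (W₂' ++ S₁' ++ W₁) ++ (W₂ ++ S₁))) U' := by
  have hW₀ : W₀ ≠ [] := by simp [hW, hW₁]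
  have hρ : rhoS W₀ (P₁ ++ W₁' ++ (W₂' ++ S₁' ++ W₁) ++ (W₂ ++ S₁)) =
      rhoS W₀ P₁ ++ rhoS W₀ (W₁' ++ (W₂' ++ S₁' ++ W₁) ++ W₂) ++ rhoS W₀ S₁ := by
    rw [show P₁ ++ W₁' ++ (W₂' ++ S₁' ++ W₁) ++ (W₂ ++ S₁) = P₁ ++ W₀ ++ S₁' ++ W₀ ++ S₁ by
        nth_rw 1 [hW']; simp [hW],
      show W₁' ++ (W₂' ++ S₁' ++ W₁) ++ W₂ = [] ++ W₀ ++ S₁' ++ W₀ by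
        nth_rw 1 [hW']; simp [hW],
      hS₁, hS₁', rhoS_append_self hW₀, hS₁', rhoS_nil]
    simp
  rw [hρ, show P₁ ++ W₁' ++ Y ++ (W₂ ++ S₁) =
    phiS W₀ (rhoS W₀ P₁) ++ (W₁' ++ Y ++ W₂) ++ phiS W₀ (rhoS W₀ S₁) by simp [phiS_rhoS]]
  refine exists_rs_step_of_redex hRWS hcomp hXY (fun N hMN hN => ?_) _ _
  exact .inl <| .inr ⟨W₁', W₂', S₁', W₁, W₂, Y, N, hW₂', hW₁, (hRWS _ hXY).2, hXY, hW, hW',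
    by simpa using hMN, hN, by simp⟩

end Lifting

-- The redex `X` cannot lie inside the irreducible block `W₀ = W₁W₂`, so it ends with `W₁`.
theorem exists_eq_append_of_irr {R : Set (List α × List α)} (hW₀ : Irr R W₀)
    {Z₁ X Y P₁ W₁ W₂ : List α} (hXY : (X, Y) ∈ R) (h : Z₁ ++ X = P₁ ++ W₁)
    (hW : W₀ = W₁ ++ W₂) : ∃ X₂, X = X₂ ++ W₁ ∧ P₁ = Z₁ ++ X₂ := by
  have hX : X <:+ Z₁ ++ X := List.suffix_append _ _
  have hW₁ : W₁ <:+ Z₁ ++ X := h ▸ List.suffix_append _ _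
  by_cases hlen : W₁.length ≤ X.length
  · obtain ⟨X₂, rfl⟩ := List.suffix_of_suffix_length_le hW₁ hX hlen
    exact ⟨X₂, rfl, (List.append_cancel_right (by simpa using h)).symm⟩
  · obtain ⟨u, rfl⟩ := List.suffix_of_suffix_length_le hX hW₁ (by omega)
    exact absurd ⟨u, X, W₂, ⟨Y, hXY⟩, by simp [hW]⟩ hW₀.2

end

theorem lemma_3_9_general {α : Type*} (R : Set (List α × List α))
    (hRWS : IsRWS R) (hcomp : CompleteRWS R)
    (W₀ : List α) (hW₀irr : Irr R W₀)
    (U V₁ : List α) (h : Step R U V₁) :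
    ∃ U' : List (α ⊕ Unit), U' ≠ [] ∧ Steps R V₁ (phiS W₀ U') ∧
      Step (RS R W₀) (rhoS W₀ U) U' := by
  have hW₀ : W₀ ≠ [] := hW₀irr.1
  obtain ⟨Z₁, Z₂, X, Y, hXY, rfl, rfl⟩ := h
  rcases rhoS_append_eq_or_crossing hW₀ (Z₁ ++ X) Z₂ with
    h₂ | ⟨P₁, W₁, W₂, S₁, hP₁, rfl, hW, hW₁, -, hS₁⟩
  · rcases rhoS_append_eq_or_crossing hW₀ Z₁ X with
      h₁ | ⟨P₁, W₁, W₂, S₁, rfl, rfl, hW, -, hW₂, hS₁⟩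
    · exact exists_rs_step_of_splits hRWS hXY h₂ h₁
    · exact exists_rs_step_of_left_crossing hRWS hcomp hXY h₂ hW hW₂ hS₁
  · obtain ⟨X₂, rfl, rfl⟩ := exists_eq_append_of_irr hW₀irr hXY hP₁ hW
    rcases rhoS_append_eq_or_crossing hW₀ Z₁ X₂ with
      h₁ | ⟨P₁, W₁', W₂', S₁', rfl, rfl, hW', -, hW₂', hS₁'⟩
    · exact exists_rs_step_of_right_crossing hRWS hcomp hXY h₁ hW hW₁ hS₁
    · exact exists_rs_step_of_double_crossing hRWS hcomp hXY hW hW₁ hS₁ hW' hW₂' hS₁'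

/-- **Lemma 3.9** (Property (P1)). For any `U ∈ A⁺` and `V₁ ∈ A⁺` with `U →_R V₁`,
there is `U' ∈ B⁺` such that `V₁ →*_R φ(U')` and `ρ(U) →_{R_S} U'`. -/
theorem lemma_3_9 {α : Type*} (R : Set (List α × List α))
    (hαfin : Finite α) (hRfin : R.Finite) (hRWS : IsRWS R) (hcomp : CompleteRWS R)
    (W₀ : List α) (hW₀len : 1 < W₀.length) (hW₀irr : Irr R W₀)
    (U V₁ : List α) (hU : U ≠ []) (h : Step R U V₁) :
    ∃ U' : List (α ⊕ Unit), U' ≠ [] ∧ Steps R V₁ (phiS W₀ U') ∧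
      Step (RS R W₀) (rhoS W₀ U) U' :=
  lemma_3_9_general R hRWS hcomp W₀ hW₀irr U V₁ h
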